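/- arXiv:2502.18945 — 2 statements merged into one kernel-verified Lean document; each statement's English description precedes it below -/
import Mathlib

section
/- Let G be a finite simple graph and v a vertex of G with degree at most 2. If G − v is (2,1)-decomposable, then G is (2,1)-decomposable. -/
/-- A graph `G` is `d`-degenerate if every nonempty (induced) subgraph has a
vertex of degree at most `d`. -/
def SimpleGraph.DegenerateLE {V : Type*} (G : SimpleGraph V) (d : ℕ) : Prop :=
  ∀ S : Set V, S.Nonempty → ∃ v ∈ S, (S ∩ G.neighborSet v).ncard ≤ d

/-- A graph `G` is `(d, h)`-decomposable if there is a subgraph `H` of `G` with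
maximum degree at most `h` such that `G - E(H)` is `d`-degenerate. -/
def SimpleGraph.IsDecomposable {V : Type*} (G : SimpleGraph V) (d h : ℕ) : Prop :=
  ∃ H : SimpleGraph V, H ≤ G ∧ (∀ v, (H.neighborSet v).ncard ≤ h) ∧
    (G \ H).DegenerateLE d

/-!
Take a decomposition `(H', G - v - E(H'))` of `G - v` and view `H'` as a subgraph of `G`. Its
maximum degree does not change, and `G - E(H')` is still `2`-degenerate: a vertex set containing
`v` has `v` itself as a vertex of degree at most `2`, and any other vertex set lives in `G - v`,
where `G - E(H')` restricts to `G - v - E(H')`.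
-/

namespace SimpleGraph

variable {V W : Type*}

theorem ncard_neighborSet_map_le (f : V ↪ W) {H : SimpleGraph V} {h : ℕ}
    (hH : ∀ v, (H.neighborSet v).ncard ≤ h) (w : W) :
    ((H.map f).neighborSet w).ncard ≤ h := by
  by_cases hw : w ∈ Set.range f
  · obtain ⟨a, rfl⟩ := hw
    rw [neighborSet_map, Set.ncard_image_of_injective _ f.injective]
    exact hH a
  · have hempty : (H.map f).neighborSet w = ∅ := by
      ext x
      simp only [mem_neighborSet, map_adj, Set.mem_empty_iff_false, iff_false]
      rintro ⟨a, b, -, rfl, -⟩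
      exact hw ⟨a, rfl⟩
    simp [hempty]

theorem comap_sdiff_map (f : V ↪ W) (G : SimpleGraph W) (H : SimpleGraph V) :
    (G \ H.map f).comap f = G.comap f \ H := by
  ext a b
  simp

theorem DegenerateLE.of_induce [Finite V] {K : SimpleGraph V} {s : Set V} {d : ℕ}
    (hs : (K.induce s).DegenerateLE d) (hout : ∀ w ∉ s, (K.neighborSet w).ncard ≤ d) :
    K.DegenerateLE d := by
  intro S hS
  by_cases hSs : ∃ w ∈ S, w ∉ s
  · obtain ⟨w, hwS, hws⟩ := hSs
    exact ⟨w, hwS, (Set.ncard_le_ncard Set.inter_subset_right).trans (hout w hws)⟩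
  · push Not at hSs
    obtain ⟨x, hx⟩ := hS
    obtain ⟨u, hu, hdeg⟩ := hs (Subtype.val ⁻¹' S) ⟨⟨x, hSs x hx⟩, hx⟩
    refine ⟨u, hu, ?_⟩
    rwa [neighborSet_induce, ← Set.preimage_inter,
      Set.ncard_preimage_of_injective_subset_range Subtype.val_injective
        (by simpa using Set.inter_subset_left.trans hSs)] at hdeg

end SimpleGraph

/-- If `v` is a vertex of degree at most `2` and `G - v` is `(2,1)`-decomposable,
then `G` is `(2,1)`-decomposable. -/
theorem statement1 {V : Type*} [Fintype V] (G : SimpleGraph V) (v : V)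
    (hdeg : (G.neighborSet v).ncard ≤ 2)
    (h : (G.induce ({v}ᶜ : Set V)).IsDecomposable 2 1) :
    G.IsDecomposable 2 1 := by
  obtain ⟨H', hH'G, hH'deg, hdegen⟩ := h
  let f := Function.Embedding.subtype (· ∈ ({v}ᶜ : Set V))
  refine ⟨H'.map f, (SimpleGraph.map_le_iff_le_comap f _ _).2 hH'G,
    SimpleGraph.ncard_neighborSet_map_le f hH'deg, ?_⟩
  refine SimpleGraph.DegenerateLE.of_induce (s := {v}ᶜ) ?_ fun w hw => ?_
  · rwa [SimpleGraph.induce, SimpleGraph.comap_sdiff_map]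
  · obtain rfl : w = v := by simpa using hw
    exact (Set.ncard_le_ncard fun _ hx => hx.1).trans hdeg
end

section
/- Let G be a finite simple graph containing four distinct vertices u, v, w, x such that the induced subgraph of G on X = {u, v, w, x} has edge set exactly {uv, vw, wu, vx} (a triangle uvw together with the edge vx), and such that deg_G(u) = deg_G(v) = 4 and deg_G(w) = deg_G(x) = 3. If G − X is (2,1)-decomposable, then G is (2,1)-decomposable. -/
/-!
Extend a decomposition `H'` of `G - X` by the matching `{uw, vx}` on `X`. In `G - E(H)` the
vertices `x, w, v, u` can be deleted in this order, each having at most two remaining neighbours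
when it goes: `x` and `w` have lost their `H`-partner, `v` has lost `w` and `x`, and `u` has lost
`v` and `w`. What remains is `G - X` without `E(H')`, which is 2-degenerate.
-/

namespace SimpleGraph

variable {V : Type*} {G G' H : SimpleGraph V} {d k : ℕ} {s : Set V}

def DegenerateLEOn (G : SimpleGraph V) (d : ℕ) (s : Set V) : Prop :=
  ∀ S ⊆ s, S.Nonempty → ∃ v ∈ S, (S ∩ G.neighborSet v).ncard ≤ d

theorem DegenerateLEOn.degenerateLE (h : G.DegenerateLEOn d Set.univ) : G.DegenerateLE d :=
  fun S hS ↦ h S (Set.subset_univ S) hS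

theorem DegenerateLE.degenerateLEOn_of_induce (h : (G.induce s).DegenerateLE d) :
    G.DegenerateLEOn d s := by
  intro S hSs hS
  obtain ⟨v, hv, hcard⟩ := h (Subtype.val ⁻¹' S) (hS.preimage' (by simpa using hSs))
  refine ⟨v, hv, ?_⟩
  have himage : S ∩ G.neighborSet v =
      Subtype.val '' (Subtype.val ⁻¹' S ∩ (G.induce s).neighborSet v) := by
    ext y
    constructor
    · rintro ⟨hyS, hy⟩
      exact ⟨⟨y, hSs hyS⟩, ⟨hyS, hy⟩, rfl⟩
    · rintro ⟨y, ⟨hyS, hy⟩, rfl⟩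
      exact ⟨hyS, hy⟩
  rwa [himage, Set.ncard_image_of_injective _ Subtype.val_injective]

theorem DegenerateLE.anti [Finite V] (hle : G ≤ G') (h : G'.DegenerateLE d) :
    G.DegenerateLE d := by
  intro S hS
  obtain ⟨v, hv, hcard⟩ := h S hS
  exact ⟨v, hv, (Set.ncard_le_ncard (Set.inter_subset_inter_right S fun _ ↦ @hle v _)).trans hcard⟩

theorem DegenerateLEOn.insert [Finite V] {a : V} (h : G.DegenerateLEOn d s)
    (ha : (s ∩ G.neighborSet a).ncard ≤ d) : G.DegenerateLEOn d (insert a s) := by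
  intro S hSs hS
  by_cases haS : a ∈ S
  · refine ⟨a, haS, (Set.ncard_le_ncard ?_).trans ha⟩
    rintro y ⟨hyS, hy⟩
    exact ⟨(hSs hyS).resolve_left (G.ne_of_adj hy).symm, hy⟩
  · exact h S (fun y hy ↦ (hSs hy).resolve_left (ne_of_mem_of_not_mem hy haS)) hS

theorem ncard_inter_neighborSet_sdiff_add_le [Finite V] {t B : Set V} {a : V}
    (hB : B ⊆ G.neighborSet a) (hBt : ∀ b ∈ B, b ∈ t → H.Adj a b) :
    (t ∩ (G \ H).neighborSet a).ncard + B.ncard ≤ (G.neighborSet a).ncard := by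
  have hdisj : Disjoint (t ∩ (G \ H).neighborSet a) B :=
    Set.disjoint_left.mpr fun b ⟨hbt, hb⟩ hbB ↦ hb.2 (hBt b hbB hbt)
  rw [← Set.ncard_union_eq hdisj]
  exact Set.ncard_le_ncard (Set.union_subset (fun b hb ↦ hb.2.1) hB)

theorem support_sup (G₁ G₂ : SimpleGraph V) : (G₁ ⊔ G₂).support = G₁.support ∪ G₂.support := by
  ext v
  simp [mem_support, exists_or]

theorem support_edge_subset (a b : V) : (edge a b).support ⊆ {a, b} := by
  intro c hc
  obtain ⟨d, hcd⟩ := (edge a b).mem_support.mp hc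
  rw [edge_adj] at hcd
  grind

theorem ncard_neighborSet_edge_le_one [Finite V] (a b c : V) :
    ((edge a b).neighborSet c).ncard ≤ 1 := by
  rw [Set.ncard_le_one]
  intro y hy z hz
  rw [mem_neighborSet, edge_adj] at hy hz
  grind

theorem ncard_neighborSet_sup_le {H₁ H₂ : SimpleGraph V}
    (h₁ : ∀ v, (H₁.neighborSet v).ncard ≤ k) (h₂ : ∀ v, (H₂.neighborSet v).ncard ≤ k)
    (hdisj : Disjoint H₁.support H₂.support) (v : V) :
    ((H₁ ⊔ H₂).neighborSet v).ncard ≤ k := by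
  rw [neighborSet_sup]
  by_cases hv : v ∈ H₁.support
  · have : H₂.neighborSet v = ∅ :=
      Set.eq_empty_of_forall_notMem fun w hw ↦ Set.disjoint_left.mp hdisj hv ⟨w, hw⟩
    rw [this, Set.union_empty]
    exact h₁ v
  · have : H₁.neighborSet v = ∅ := Set.eq_empty_of_forall_notMem fun w hw ↦ hv ⟨w, hw⟩
    rw [this, Set.empty_union]
    exact h₂ v

theorem ncard_neighborSet_spanningCoe_le {H : SimpleGraph s}
    (h : ∀ v, (H.neighborSet v).ncard ≤ k) (v : V) :
    (H.spanningCoe.neighborSet v).ncard ≤ k := by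
  by_cases hv : v ∈ s
  · rw [show v = Function.Embedding.subtype _ ⟨v, hv⟩ from rfl, neighborSet_map,
      Set.ncard_image_of_injective _ (Function.Embedding.injective _)]
    exact h _
  · have : H.spanningCoe.neighborSet v = ∅ := by
      refine Set.eq_empty_of_forall_notMem fun w hw ↦ ?_
      obtain ⟨v', -, -, rfl, -⟩ := (map_adj _ _ _ _).mp hw
      exact hv v'.2
    rw [this, Set.ncard_empty]
    exact Nat.zero_le k

theorem IsDecomposable.extend_of_induce_compl [Finite V] {X : Set V} {K : SimpleGraph V}
    (h : (G.induce Xᶜ).IsDecomposable d k) (hKG : K ≤ G)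
    (hKdeg : ∀ v, (K.neighborSet v).ncard ≤ k) (hKX : K.support ⊆ X) :
    ∃ H, K ≤ H ∧ H ≤ G ∧ (∀ v, (H.neighborSet v).ncard ≤ k) ∧ (G \ H).DegenerateLEOn d Xᶜ := by
  obtain ⟨H', hH'G, hH'deg, hH'dgn⟩ := h
  have hdisj : Disjoint H'.spanningCoe.support K.support := by
    rw [support_spanningCoe]
    exact Set.disjoint_of_subset (by simp) hKX disjoint_compl_left
  have hle : (G \ (H'.spanningCoe ⊔ K)).induce Xᶜ ≤ G.induce Xᶜ \ H' :=
    fun a b hab ↦ ⟨hab.1, fun h' ↦ hab.2 (.inl (map_adj_apply.mpr h'))⟩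
  exact ⟨H'.spanningCoe ⊔ K, le_sup_right,
    sup_le ((map_monotone _ hH'G).trans (G.spanningCoe_induce_le _)) hKG,
    ncard_neighborSet_sup_le (ncard_neighborSet_spanningCoe_le hH'deg) hKdeg hdisj,
    (hH'dgn.anti hle).degenerateLEOn_of_induce⟩

theorem degenerateLE_sdiff_of_triangle_pendant [Finite V] {u v w x : V} (huw : u ≠ w)
    (hux : u ≠ x) (hvw : v ≠ w) (hwx : w ≠ x) (hGuv : G.Adj u v) (hGuw : G.Adj u w)
    (hGvw : G.Adj v w) (hGvx : G.Adj v x)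
    (hdu : (G.neighborSet u).ncard = 4) (hdv : (G.neighborSet v).ncard = 4)
    (hdw : (G.neighborSet w).ncard = 3) (hdx : (G.neighborSet x).ncard = 3)
    (hHwu : H.Adj w u) (hHxv : H.Adj x v)
    (hX : (G \ H).DegenerateLEOn 2 ({u, v, w, x} : Set V)ᶜ) : (G \ H).DegenerateLE 2 := by
  have hu := hX.insert (a := u) (by
    have := ncard_inter_neighborSet_sdiff_add_le (G := G) (H := H)
      (t := ({u, v, w, x} : Set V)ᶜ) (Set.pair_subset hGuv hGuw) (by simp)
    rw [Set.ncard_pair hvw, hdu] at this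
    omega)
  have hv := hu.insert (a := v) (by
    have := ncard_inter_neighborSet_sdiff_add_le (G := G) (H := H)
      (t := insert u ({u, v, w, x} : Set V)ᶜ) (Set.pair_subset hGvw hGvx)
      (by simp [huw.symm, hux.symm])
    rw [Set.ncard_pair hwx, hdv] at this
    omega)
  have hw := hv.insert (a := w) (by
    have := ncard_inter_neighborSet_sdiff_add_le (G := G) (H := H)
      (t := insert v (insert u ({u, v, w, x} : Set V)ᶜ))
      (Set.singleton_subset_iff.mpr hGuw.symm) (by rintro b rfl -; exact hHwu)
    rw [Set.ncard_singleton, hdw] at this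
    omega)
  have hx := hw.insert (a := x) (by
    have := ncard_inter_neighborSet_sdiff_add_le (G := G) (H := H)
      (t := insert w (insert v (insert u ({u, v, w, x} : Set V)ᶜ)))
      (Set.singleton_subset_iff.mpr hGvx.symm) (by rintro b rfl -; exact hHxv)
    rw [Set.ncard_singleton, hdx] at this
    omega)
  have hall : insert x (insert w (insert v (insert u ({u, v, w, x} : Set V)ᶜ))) = Set.univ := by
    ext y
    simp only [Set.mem_insert_iff, Set.mem_compl_iff, Set.mem_univ, iff_true]
    tauto
  exact (hall ▸ hx).degenerateLE

end SimpleGraph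

open SimpleGraph

/-- Reducible configuration of Figure 5(a): a triangle `uvw` together with the
pendant edge `vx`, inducing exactly these four edges, with `deg u = deg v = 4`
and `deg w = deg x = 3`. -/
theorem statement4 {V : Type*} [Fintype V] (G : SimpleGraph V) (u v w x : V)
    (hne : [u, v, w, x].Pairwise (· ≠ ·))
    (hind : ∀ a ∈ ({u, v, w, x} : Set V), ∀ b ∈ ({u, v, w, x} : Set V),
      (G.Adj a b ↔ s(a, b) ∈ ({s(u, v), s(v, w), s(w, u), s(v, x)} : Set (Sym2 V))))
    (hdu : (G.neighborSet u).ncard = 4) (hdv : (G.neighborSet v).ncard = 4)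
    (hdw : (G.neighborSet w).ncard = 3) (hdx : (G.neighborSet x).ncard = 3)
    (h : (G.induce (({u, v, w, x} : Set V)ᶜ)).IsDecomposable 2 1) :
    G.IsDecomposable 2 1 := by
  obtain ⟨⟨huv, huw, hux⟩, ⟨hvw, hvx⟩, hwx⟩ :
      (u ≠ v ∧ u ≠ w ∧ u ≠ x) ∧ (v ≠ w ∧ v ≠ x) ∧ w ≠ x := by simpa using hne
  have hGuv : G.Adj u v := (hind u (by simp) v (by simp)).mpr (by simp)
  have hGuw : G.Adj u w := (hind u (by simp) w (by simp)).mpr (by simp)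
  have hGvw : G.Adj v w := (hind v (by simp) w (by simp)).mpr (by simp)
  have hGvx : G.Adj v x := (hind v (by simp) x (by simp)).mpr (by simp)
  have hKdeg : ∀ y, ((edge u w ⊔ edge v x).neighborSet y).ncard ≤ 1 :=
    ncard_neighborSet_sup_le (ncard_neighborSet_edge_le_one u w)
      (ncard_neighborSet_edge_le_one v x) (Set.disjoint_of_subset (support_edge_subset u w)
        (support_edge_subset v x) (by simp [huv.symm, hux.symm, hvw, hwx.symm]))
  have hKX : (edge u w ⊔ edge v x).support ⊆ {u, v, w, x} := by
    rw [support_sup]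
    exact Set.union_subset ((support_edge_subset u w).trans (by simp [Set.insert_subset_iff]))
      ((support_edge_subset v x).trans (by simp [Set.insert_subset_iff]))
  obtain ⟨H, hKH, hHG, hHdeg, hHdgn⟩ := h.extend_of_induce_compl
    (sup_le ((G.edge_le_iff).mpr (.inr hGuw)) ((G.edge_le_iff).mpr (.inr hGvx))) hKdeg hKX
  exact ⟨H, hHG, hHdeg, degenerateLE_sdiff_of_triangle_pendant huw hux hvw hwx
    hGuv hGuw hGvw hGvx hdu hdv hdw hdx
    (hKH (.inl ((edge_adj ..).mpr ⟨.inr ⟨rfl, rfl⟩, huw.symm⟩)))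
    (hKH (.inr ((edge_adj ..).mpr ⟨.inr ⟨rfl, rfl⟩, hvx.symm⟩))) hHdgn⟩
end
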